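/- For every finite two-person zero-sum game (payoffs satisfying H_1(s) = −H_2(s) for all aggregate strategies s), the mixed extension has a value: the maximum over mixed strategies σ_1 of player 1 of the minimum over mixed strategies σ_2 of player 2 of μH_1(σ_1, σ_2) equals the minimum over σ_2 of the maximum over σ_1 of μH_1(σ_1, σ_2). -/

import Mathlib

/-- A mixed strategy (probability distribution) on a finite type. -/
def IsMixed {α : Type*} [Fintype α] (σ : α → ℝ) : Prop :=
  (∀ a, 0 ≤ σ a) ∧ ∑ a, σ a = 1

/-- Expected payoff of player 1 in a two-person game under mixed strategies. -/
noncomputable def expPayoff2 {S1 S2 : Type*} [Fintype S1] [Fintype S2]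
    (H : S1 × S2 → ℝ) (σ1 : S1 → ℝ) (σ2 : S2 → ℝ) : ℝ :=
  ∑ s1 : S1, ∑ s2 : S2, σ1 s1 * σ2 s2 * H (s1, s2)

/-! The mixed extension is a bilinear game on a product of simplices, so the theorem is the
bilinear case of Sion's minimax theorem: a continuous bilinear form on a product of compact convex
sets has a saddle point, and at a saddle point both iterated extrema equal the saddle value.
Compactness also bounds the payoff, as the conditionally complete extrema of `ℝ` require. -/

namespace IsSaddlePointOn

variable {E F β : Type*} [ConditionallyCompleteLattice β] {X : Set E} {Y : Set F}
  {f : E → F → β} {a : E} {b : F}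

theorem ciInf_ciSup_eq (h : IsSaddlePointOn X Y f a b) (ha : a ∈ X) (hb : b ∈ Y)
    (hbdd : ∀ x ∈ X, BddAbove (f x '' Y)) :
    ⨅ x : X, ⨆ y : Y, f x y = f a b := by
  have hsup : ∀ x ∈ X, BddAbove (Set.range fun y : Y => f x y) := fun x hx => by
    simpa only [Set.image_eq_range] using hbdd x hx
  have hmax : ⨆ y : Y, f a y = f a b :=
    IsGreatest.csSup_eq ⟨⟨⟨b, hb⟩, rfl⟩, by rintro _ ⟨y, rfl⟩; exact h a ha y y.2⟩
  refine IsLeast.csInf_eq ⟨⟨⟨a, ha⟩, hmax⟩, ?_⟩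
  rintro _ ⟨x, rfl⟩
  exact (h x x.2 b hb).trans (le_ciSup (hsup x x.2) ⟨b, hb⟩)

theorem ciSup_ciInf_eq (h : IsSaddlePointOn X Y f a b) (ha : a ∈ X) (hb : b ∈ Y)
    (hbdd : ∀ y ∈ Y, BddBelow ((f · y) '' X)) :
    ⨆ y : Y, ⨅ x : X, f x y = f a b := by
  have hinf : ∀ y ∈ Y, BddBelow (Set.range fun x : X => f x y) := fun y hy => by
    simpa only [Set.image_eq_range] using hbdd y hy
  have hmin : ⨅ x : X, f x b = f a b :=
    IsLeast.csInf_eq ⟨⟨⟨a, ha⟩, rfl⟩, by rintro _ ⟨x, rfl⟩; exact h x x.2 b hb⟩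
  refine IsGreatest.csSup_eq ⟨⟨⟨b, hb⟩, hmin⟩, ?_⟩
  rintro _ ⟨y, rfl⟩
  exact (ciInf_le (hinf y y.2) ⟨a, ha⟩).trans (h a ha y y.2)

end IsSaddlePointOn

namespace LinearMap

variable {E F : Type*} [NormedAddCommGroup E] [NormedSpace ℝ E] [FiniteDimensional ℝ E]
  [NormedAddCommGroup F] [NormedSpace ℝ F] [FiniteDimensional ℝ F]
  (B : E →ₗ[ℝ] F →ₗ[ℝ] ℝ) {X : Set E} {Y : Set F}

theorem exists_isSaddlePointOn (hXne : X.Nonempty) (hXc : Convex ℝ X) (hXk : IsCompact X)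
    (hYne : Y.Nonempty) (hYc : Convex ℝ Y) (hYk : IsCompact Y) :
    ∃ a ∈ X, ∃ b ∈ Y, IsSaddlePointOn X Y (fun x y => B x y) a b :=
  Sion.exists_isSaddlePointOn hXne hXc hXk
    (fun y _ => (B.flip y).continuous_of_finiteDimensional.continuousOn.lowerSemicontinuousOn)
    (fun y _ => ((B.flip y).convexOn hXc).quasiconvexOn) hYc hYne hYk
    (fun x _ => (B x).continuous_of_finiteDimensional.continuousOn.upperSemicontinuousOn)
    (fun x _ => ((B x).concaveOn hYc).quasiconcaveOn)

theorem ciSup_ciInf_eq_ciInf_ciSup (hXne : X.Nonempty) (hXc : Convex ℝ X) (hXk : IsCompact X)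
    (hYne : Y.Nonempty) (hYc : Convex ℝ Y) (hYk : IsCompact Y) :
    ⨆ y : Y, ⨅ x : X, B x y = ⨅ x : X, ⨆ y : Y, B x y := by
  obtain ⟨a, ha, b, hb, hab⟩ := B.exists_isSaddlePointOn hXne hXc hXk hYne hYc hYk
  rw [hab.ciSup_ciInf_eq ha hb fun y _ =>
      hXk.bddBelow_image (B.flip y).continuous_of_finiteDimensional.continuousOn,
    hab.ciInf_ciSup_eq ha hb fun x _ =>
      hYk.bddAbove_image (B x).continuous_of_finiteDimensional.continuousOn]

end LinearMap

/-- Player 2's strategy comes first: in `IsSaddlePointOn` the first variable is minimized. -/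
noncomputable def expPayoff2Bilin {S1 S2 : Type*} [Fintype S1] [Fintype S2] (H : S1 × S2 → ℝ) :
    (S2 → ℝ) →ₗ[ℝ] (S1 → ℝ) →ₗ[ℝ] ℝ :=
  LinearMap.mk₂ ℝ (fun σ2 σ1 => expPayoff2 H σ1 σ2)
    (fun _ _ _ => by simp only [expPayoff2, Pi.add_apply, mul_add, add_mul, Finset.sum_add_distrib])
    (fun _ _ _ => by
      simp only [expPayoff2, Pi.smul_apply, smul_eq_mul, Finset.mul_sum]
      exact Finset.sum_congr rfl fun _ _ => Finset.sum_congr rfl fun _ _ => by ring)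
    (fun _ _ _ => by simp only [expPayoff2, Pi.add_apply, add_mul, Finset.sum_add_distrib])
    (fun _ _ _ => by
      simp only [expPayoff2, Pi.smul_apply, smul_eq_mul, Finset.mul_sum]
      exact Finset.sum_congr rfl fun _ _ => Finset.sum_congr rfl fun _ _ => by ring)

theorem minimax_value_general
    (S1 S2 : Type*) [Fintype S1] [Fintype S2] [Nonempty S1] [Nonempty S2]
    (H1 : S1 × S2 → ℝ) :
    (⨆ σ1 : {f : S1 → ℝ // IsMixed f}, ⨅ σ2 : {g : S2 → ℝ // IsMixed g},
        expPayoff2 H1 σ1.1 σ2.1)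
      = ⨅ σ2 : {g : S2 → ℝ // IsMixed g}, ⨆ σ1 : {f : S1 → ℝ // IsMixed f},
        expPayoff2 H1 σ1.1 σ2.1 :=
  -- `{f // IsMixed f}` is definitionally the subtype of `stdSimplex ℝ S1`.
  (expPayoff2Bilin H1).ciSup_ciInf_eq_ciInf_ciSup
    (Set.Nonempty.of_subtype (s := stdSimplex ℝ S2)) (convex_stdSimplex ℝ S2)
    (isCompact_stdSimplex ℝ S2)
    (Set.Nonempty.of_subtype (s := stdSimplex ℝ S1)) (convex_stdSimplex ℝ S1)
    (isCompact_stdSimplex ℝ S1)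

/-- Von Neumann's minimax theorem: every finite two-person zero-sum game has a value
in mixed strategies. -/
theorem minimax_value
    (S1 S2 : Type*) [Fintype S1] [Fintype S2] [Nonempty S1] [Nonempty S2]
    (H1 H2 : S1 × S2 → ℝ) (hzero : ∀ s, H1 s = - H2 s) :
    (⨆ σ1 : {f : S1 → ℝ // IsMixed f}, ⨅ σ2 : {g : S2 → ℝ // IsMixed g},
        expPayoff2 H1 σ1.1 σ2.1)
      = ⨅ σ2 : {g : S2 → ℝ // IsMixed g}, ⨆ σ1 : {f : S1 → ℝ // IsMixed f},
        expPayoff2 H1 σ1.1 σ2.1 :=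
  minimax_value_general S1 S2 H1
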